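/- arXiv:1302.1462 — 8 statements merged into one kernel-verified Lean document; each statement's English description precedes it below -/
import Mathlib

section
/- Let f : (-π/2, π/2) → (-π/2, π/2) be differentiable with f(0)=0 and λ(f) := sup|f'| < 1. Define ρ(θ) = cos(f(θ))/cos(θ). Then ρ is continuous, ρ(θ) ≥ 1 for all θ, with equality if and only if θ = 0, and ρ(θ) → +∞ as θ → ±π/2. -/
/-!
By the mean value theorem `|f θ| ≤ λ |θ|`, so `|f θ| < |θ|` for `θ ≠ 0`; since `cos` is even and
decreasing on `[0, π]`, this gives `cos θ < cos (f θ)`. Near `±π/2` the numerator stays above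
`cos (λ π/2) > 0` while the denominator tends to `0⁺`.
-/

open Real Set Filter Topology

theorem abs_le_mul_abs_of_abs_derivWithin_le {f : ℝ → ℝ} {s : Set ℝ} {C x : ℝ}
    (hs : Convex ℝ s) (hf : DifferentiableOn ℝ f s) (hf' : ∀ y ∈ s, |derivWithin f s y| ≤ C)
    (h0 : 0 ∈ s) (hf0 : f 0 = 0) (hx : x ∈ s) : |f x| ≤ C * |x| := by
  simpa [hf0] using hs.norm_image_sub_le_of_norm_derivWithin_le hf hf' h0 hx

theorem Real.cos_le_cos_of_abs_le {x y : ℝ} (hx : |x| ≤ π) (hyx : |y| ≤ |x|) :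
    cos x ≤ cos y := by
  simpa only [cos_abs] using cos_le_cos_of_nonneg_of_le_pi (abs_nonneg y) hx hyx

theorem Real.cos_lt_cos_of_abs_lt {x y : ℝ} (hx : |x| ≤ π) (hyx : |y| < |x|) :
    cos x < cos y := by
  simpa only [cos_abs] using cos_lt_cos_of_nonneg_of_le_pi (abs_nonneg y) hx hyx

theorem Filter.Tendsto.div_atTop_of_nhdsGT_zero {α : Type*} {l : Filter α} {g h : α → ℝ}
    {c : ℝ} (hc : 0 < c) (hg : Tendsto g l (𝓝[>] 0)) (hh : ∀ᶠ x in l, c ≤ h x) :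
    Tendsto (fun x => h x / g x) l atTop := by
  refine tendsto_atTop_mono' l ?_ (hg.inv_tendsto_nhdsGT_zero.const_mul_atTop hc)
  filter_upwards [hh, hg.eventually self_mem_nhdsWithin] with x hcx (hgx : 0 < g x)
  exact mul_le_mul_of_nonneg_right hcx (inv_nonneg.2 hgx.le)

theorem abs_le_pi_div_two_of_mem_Ioo {θ : ℝ} (hθ : θ ∈ Ioo (-(π / 2)) (π / 2)) :
    |θ| ≤ π / 2 :=
  abs_le.2 ⟨hθ.1.le, hθ.2.le⟩

theorem abs_le_pi_of_mem_Ioo {θ : ℝ} (hθ : θ ∈ Ioo (-(π / 2)) (π / 2)) : |θ| ≤ π :=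
  (abs_le_pi_div_two_of_mem_Ioo hθ).trans (by linarith [pi_pos])

theorem rho_properties_general (f : ℝ → ℝ) (lam : ℝ)
    (hdiff : DifferentiableOn ℝ f (Ioo (-(π / 2)) (π / 2)))
    (hderiv : ∀ θ ∈ Ioo (-(π / 2)) (π / 2),
      |derivWithin f (Ioo (-(π / 2)) (π / 2)) θ| ≤ lam)
    (hlam : lam < 1) (hf0 : f 0 = 0) :
    ContinuousOn (fun θ => Real.cos (f θ) / Real.cos θ) (Ioo (-(π / 2)) (π / 2)) ∧
    (∀ θ ∈ Ioo (-(π / 2)) (π / 2), 1 ≤ Real.cos (f θ) / Real.cos θ) ∧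
    (∀ θ ∈ Ioo (-(π / 2)) (π / 2), Real.cos (f θ) / Real.cos θ = 1 ↔ θ = 0) ∧
    Tendsto (fun θ => Real.cos (f θ) / Real.cos θ)
      (nhdsWithin (π / 2) (Ioo (-(π / 2)) (π / 2))) atTop ∧
    Tendsto (fun θ => Real.cos (f θ) / Real.cos θ)
      (nhdsWithin (-(π / 2)) (Ioo (-(π / 2)) (π / 2))) atTop := by
  have h0 : (0 : ℝ) ∈ Ioo (-(π / 2)) (π / 2) := ⟨by linarith [pi_div_two_pos], pi_div_two_pos⟩
  have hlam0 : 0 ≤ lam := (abs_nonneg _).trans (hderiv 0 h0)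
  have hlip : ∀ θ ∈ Ioo (-(π / 2)) (π / 2), |f θ| ≤ lam * |θ| := fun θ hθ =>
    abs_le_mul_abs_of_abs_derivWithin_le (convex_Ioo _ _) hdiff hderiv h0 hf0 hθ
  have hlt : ∀ θ ∈ Ioo (-(π / 2)) (π / 2), θ ≠ 0 → cos θ < cos (f θ) := fun θ hθ hθ0 =>
    cos_lt_cos_of_abs_lt (abs_le_pi_of_mem_Ioo hθ)
      ((hlip θ hθ).trans_lt (mul_lt_of_lt_one_left (abs_pos.2 hθ0) hlam))
  have hle : ∀ θ ∈ Ioo (-(π / 2)) (π / 2), cos θ ≤ cos (f θ) := fun θ hθ =>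
    cos_le_cos_of_abs_le (abs_le_pi_of_mem_Ioo hθ)
      ((hlip θ hθ).trans (mul_le_of_le_one_left (abs_nonneg θ) hlam.le))
  have hc : lam * (π / 2) ∈ Ioo (-(π / 2)) (π / 2) :=
    ⟨by nlinarith [pi_div_two_pos], mul_lt_of_lt_one_left pi_div_two_pos hlam⟩
  have hbound : ∀ θ ∈ Ioo (-(π / 2)) (π / 2), cos (lam * (π / 2)) ≤ cos (f θ) := by
    intro θ hθ
    refine cos_le_cos_of_abs_le (abs_le_pi_of_mem_Ioo hc) ((hlip θ hθ).trans ?_)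
    rw [abs_of_nonneg (by positivity : 0 ≤ lam * (π / 2))]
    exact mul_le_mul_of_nonneg_left (abs_le_pi_div_two_of_mem_Ioo hθ) hlam0
  have hlim : ∀ a, Tendsto cos (𝓝[Ioo (-(π / 2)) (π / 2)] a) (𝓝[>] 0) →
      Tendsto (fun θ => cos (f θ) / cos θ) (𝓝[Ioo (-(π / 2)) (π / 2)] a) atTop := fun a ha =>
    ha.div_atTop_of_nhdsGT_zero (cos_pos_of_mem_Ioo hc) (eventually_nhdsWithin_of_forall hbound)
  refine ⟨?_, fun θ hθ => (one_le_div (cos_pos_of_mem_Ioo hθ)).2 (hle θ hθ), ?_,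
    hlim _ (tendsto_cos_pi_div_two.mono_left (nhdsWithin_mono _ Ioo_subset_Iio_self)),
    hlim _ (tendsto_cos_neg_pi_div_two.mono_left (nhdsWithin_mono _ Ioo_subset_Ioi_self))⟩
  · exact (continuous_cos.comp_continuousOn hdiff.continuousOn).div continuous_cos.continuousOn
      fun θ hθ => (cos_pos_of_mem_Ioo hθ).ne'
  · intro θ hθ
    rw [div_eq_one_iff_eq (cos_pos_of_mem_Ioo hθ).ne']
    refine ⟨fun h => by_contra fun hθ0 => (hlt θ hθ hθ0).ne' h, ?_⟩
    rintro rfl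
    rw [hf0]

/-- For a contracting reflection law `f`, the expansion factor
`ρ(θ) = cos (f θ) / cos θ` is continuous on `(-π/2, π/2)`, satisfies `ρ(θ) ≥ 1` with
equality iff `θ = 0`, and tends to `+∞` as `θ → ±π/2`. -/
theorem rho_properties (f : ℝ → ℝ) (lam : ℝ)
    (hmap : ∀ θ ∈ Ioo (-(π / 2)) (π / 2), f θ ∈ Ioo (-(π / 2)) (π / 2))
    (hdiff : DifferentiableOn ℝ f (Ioo (-(π / 2)) (π / 2)))
    (hderiv : ∀ θ ∈ Ioo (-(π / 2)) (π / 2),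
      |derivWithin f (Ioo (-(π / 2)) (π / 2)) θ| ≤ lam)
    (hlam : lam < 1) (hf0 : f 0 = 0) :
    ContinuousOn (fun θ => Real.cos (f θ) / Real.cos θ) (Ioo (-(π / 2)) (π / 2)) ∧
    (∀ θ ∈ Ioo (-(π / 2)) (π / 2), 1 ≤ Real.cos (f θ) / Real.cos θ) ∧
    (∀ θ ∈ Ioo (-(π / 2)) (π / 2), Real.cos (f θ) / Real.cos θ = 1 ↔ θ = 0) ∧
    Tendsto (fun θ => Real.cos (f θ) / Real.cos θ)
      (nhdsWithin (π / 2) (Ioo (-(π / 2)) (π / 2))) atTop ∧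
    Tendsto (fun θ => Real.cos (f θ) / Real.cos θ)
      (nhdsWithin (-(π / 2)) (Ioo (-(π / 2)) (π / 2))) atTop :=
  rho_properties_general f lam hdiff hderiv hlam hf0
end

section
/- Let f be a contracting reflection law with λ(f) < 1, and define ρ(θ) = cos(f(θ))/cos(θ). Then for every ε with 0 < ε < π/2, the quantity r(ε) := min_{ε ≤ |θ| < π/2} ρ(θ) satisfies r(ε) > 1. -/
open Real Set

/-!
By the mean value theorem `|f θ| ≤ λ |θ|`, so `cos (f θ) ≥ cos (λ |θ|)`. The excess
`cos (λ t) - cos t = 2 sin ((1 + λ) t / 2) sin ((1 - λ) t / 2)` is nondecreasing on `[0, π/2]`,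
hence at least `cos (λ ε) - cos ε > 0` for `ε ≤ t`; dividing by `cos θ ≤ 1` gives
`ρ(θ) ≥ 1 + (cos (λ ε) - cos ε)` on the whole range.
-/

theorem Real.cos_mul_sub_cos (l t : ℝ) :
    cos (l * t) - cos t = 2 * sin ((1 + l) * t / 2) * sin ((1 - l) * t / 2) := by
  rw [cos_sub_cos, show (l * t - t) / 2 = -((1 - l) * t / 2) by ring, sin_neg]
  ring_nf

theorem Real.monotoneOn_cos_mul_sub_cos {l : ℝ} (hl0 : 0 ≤ l) (hl1 : l ≤ 1) :
    MonotoneOn (fun t => cos (l * t) - cos t) (Icc 0 (π / 2)) := by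
  have hsin {c : ℝ} (hc0 : 0 ≤ c) (hc1 : c ≤ 2) {s t : ℝ} (hs : s ∈ Icc 0 (π / 2))
      (ht : t ∈ Icc 0 (π / 2)) (hst : s ≤ t) :
      0 ≤ sin (c * s / 2) ∧ sin (c * s / 2) ≤ sin (c * t / 2) := by
    obtain ⟨hs0, hsπ⟩ := hs
    obtain ⟨ht0, htπ⟩ := ht
    refine ⟨sin_nonneg_of_nonneg_of_le_pi (by positivity) (by nlinarith [pi_pos]), ?_⟩
    exact sin_le_sin_of_le_of_le_pi_div_two (by nlinarith [pi_pos]) (by nlinarith [pi_pos])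
      (by nlinarith)
  intro s hs t ht hst
  obtain ⟨hp0, hp⟩ := hsin (c := 1 + l) (by linarith) (by linarith) hs ht hst
  obtain ⟨hm0, hm⟩ := hsin (c := 1 - l) (by linarith) (by linarith) hs ht hst
  simp only [cos_mul_sub_cos, mul_assoc]
  gcongr 2 * ?_
  exact mul_le_mul hp hm hm0 (hp0.trans hp)

theorem one_add_cos_mul_sub_cos_le_cos_div_cos {l ε θ x : ℝ} (hl0 : 0 ≤ l) (hl1 : l ≤ 1)
    (hε : 0 ≤ ε) (hεθ : ε ≤ |θ|) (hθ : |θ| < π / 2) (hx : |x| ≤ l * |θ|) :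
    1 + (cos (l * ε) - cos ε) ≤ cos x / cos θ := by
  have hmono := monotoneOn_cos_mul_sub_cos hl0 hl1
  have hεI : ε ∈ Icc 0 (π / 2) := ⟨hε, by linarith⟩
  have hgap_nonneg : 0 ≤ cos (l * ε) - cos ε := by
    simpa using hmono ⟨le_rfl, by linarith [pi_pos]⟩ hεI hε
  have hgap_le : cos (l * ε) - cos ε ≤ cos (l * |θ|) - cos θ := by
    rw [← cos_abs θ]
    exact hmono hεI ⟨abs_nonneg θ, hθ.le⟩ hεθ
  have hcos_x : cos (l * |θ|) ≤ cos x := by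
    rw [← cos_abs x]
    exact cos_le_cos_of_nonneg_of_le_pi (abs_nonneg x) (by nlinarith [pi_pos]) hx
  have hcosθ : 0 < cos θ := cos_pos_of_mem_Ioo (abs_lt.mp hθ)
  rw [le_div_iff₀ hcosθ]
  nlinarith [mul_le_mul_of_nonneg_left (cos_le_one θ) hgap_nonneg]

theorem r_eps_gt_one_general (f : ℝ → ℝ) (lam : ℝ)
    (hdiff : DifferentiableOn ℝ f (Ioo (-(π / 2)) (π / 2)))
    (hderiv : ∀ θ ∈ Ioo (-(π / 2)) (π / 2),
      |derivWithin f (Ioo (-(π / 2)) (π / 2)) θ| ≤ lam)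
    (hlam : lam < 1) (hf0 : f 0 = 0) :
    ∀ ε : ℝ, 0 < ε → ε < π / 2 →
      1 < sInf ((fun θ => Real.cos (f θ) / Real.cos θ) ''
        {θ : ℝ | ε ≤ |θ| ∧ |θ| < π / 2}) := by
  intro ε hε hεπ
  have h0 : (0 : ℝ) ∈ Ioo (-(π / 2)) (π / 2) := ⟨by linarith, by linarith⟩
  have hlam0 : 0 ≤ lam := (abs_nonneg _).trans (hderiv 0 h0)
  have hgap : 0 < cos (lam * ε) - cos ε :=
    sub_pos.mpr <| cos_lt_cos_of_nonneg_of_le_pi (by positivity) (by linarith [pi_pos])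
      (by nlinarith)
  have hne : ((fun θ => cos (f θ) / cos θ) '' {θ : ℝ | ε ≤ |θ| ∧ |θ| < π / 2}).Nonempty :=
    ⟨_, ε, ⟨(abs_of_pos hε).ge, (abs_of_pos hε).trans_lt hεπ⟩, rfl⟩
  refine (lt_add_of_pos_right 1 hgap).trans_le (le_csInf hne ?_)
  rintro _ ⟨θ, ⟨hεθ, hθ⟩, rfl⟩
  have hfθ : |f θ| ≤ lam * |θ| := by
    simpa [hf0] using
      (convex_Ioo _ _).norm_image_sub_le_of_norm_derivWithin_le hdiff hderiv h0 (abs_lt.mp hθ)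
  exact one_add_cos_mul_sub_cos_le_cos_div_cos hlam0 hlam.le hε.le hεθ hθ hfθ

/-- For a contracting reflection law `f` with `ρ(θ) = cos (f θ) / cos θ`, for every
`0 < ε < π/2` the quantity `r(ε) = inf { ρ(θ) : ε ≤ |θ| < π/2 }` is strictly
greater than `1`. -/
theorem r_eps_gt_one (f : ℝ → ℝ) (lam : ℝ)
    (hmap : ∀ θ ∈ Ioo (-(π / 2)) (π / 2), f θ ∈ Ioo (-(π / 2)) (π / 2))
    (hdiff : DifferentiableOn ℝ f (Ioo (-(π / 2)) (π / 2)))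
    (hderiv : ∀ θ ∈ Ioo (-(π / 2)) (π / 2),
      |derivWithin f (Ioo (-(π / 2)) (π / 2)) θ| ≤ lam)
    (hlam : lam < 1) (hf0 : f 0 = 0) :
    ∀ ε : ℝ, 0 < ε → ε < π / 2 →
      1 < sInf ((fun θ => Real.cos (f θ) / Real.cos θ) ''
        {θ : ℝ | ε ≤ |θ| ∧ |θ| < π / 2}) :=
  r_eps_gt_one_general f lam hdiff hderiv hlam hf0
end

section
/- Let 0 < λ < 1, 0 < θ₀ < λπ/2, and m > m_λ where m_λ = (2/log λ)·log((2/π)·cos(πλ/2)). If |θ| satisfies cos|θ| ≤ sin(λ^{m-1}·θ₀), then cos(f(θ))/cos(θ) ≥ λ^{-m/2} for any function f with |f(θ)| ≤ λπ/2 (so that cos(f(θ)) ≥ cos(πλ/2)). -/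
open Real

/-!
After a block of `m` collisions the angle satisfies `cos θ ≤ sin (λ^(m-1) θ₀) ≤ λ^(m-1) θ₀ < λ^m π/2`,
while `m > m_λ` says exactly `λ^(m/2) π/2 < cos (πλ/2) ≤ cos fθ`. Dividing, the ratio
`cos fθ / cos θ` exceeds `λ^(m/2) / λ^m = λ^(-m/2)`.
-/

lemma pow_sub_one_mul_le_pow {a : ℝ} (ha : a ≤ 1) (m : ℕ) :
    a ^ (m - 1) * a ≤ a ^ m := by
  cases m with
  | zero => simpa using ha
  | succ m => simp [pow_succ]

lemma cos_lt_pow_mul_pi_div_two {lam θ₀ θ : ℝ} {m : ℕ} (hlam0 : 0 < lam) (hlam1 : lam < 1)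
    (hθ₀ : 0 < θ₀) (hθ₀' : θ₀ < lam * π / 2)
    (hcos : cos |θ| ≤ sin (lam ^ (m - 1) * θ₀)) :
    cos θ < lam ^ m * (π / 2) :=
  calc cos θ = cos |θ| := (cos_abs θ).symm
    _ ≤ sin (lam ^ (m - 1) * θ₀) := hcos
    _ ≤ lam ^ (m - 1) * θ₀ := sin_le (by positivity)
    _ < lam ^ (m - 1) * (lam * π / 2) := by gcongr
    _ = lam ^ (m - 1) * lam * (π / 2) := by ring
    _ ≤ lam ^ m * (π / 2) := by
      gcongr
      exact pow_sub_one_mul_le_pow hlam1.le m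

lemma rpow_half_mul_pi_div_two_lt_cos {lam t : ℝ} (hlam0 : 0 < lam) (hlam1 : lam < 1)
    (ht : t > 2 / log lam * log (2 / π * cos (π * lam / 2))) :
    lam ^ (t / 2) * (π / 2) < cos (π * lam / 2) := by
  have hc : 0 < cos (π * lam / 2) :=
    cos_pos_of_mem_Ioo ⟨by nlinarith [pi_pos], by nlinarith [pi_pos]⟩
  have hlogb : logb lam (2 / π * cos (π * lam / 2)) < t / 2 := by
    rw [logb, div_eq_mul_inv]
    linarith [show 2 / log lam * log (2 / π * cos (π * lam / 2))
      = 2 * (log (2 / π * cos (π * lam / 2)) * (log lam)⁻¹) by ring]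
  have := (logb_lt_iff_lt_rpow_of_base_lt_one hlam0 hlam1 (by positivity)).1 hlogb
  calc lam ^ (t / 2) * (π / 2) < 2 / π * cos (π * lam / 2) * (π / 2) := by gcongr
    _ = cos (π * lam / 2) := by field_simp

lemma rpow_neg_half_le_div {b t d e K : ℝ} (hb : 0 < b) (hd : 0 < d)
    (hdK : d ≤ b ^ t * K) (hK : b ^ (t / 2) * K ≤ e) :
    b ^ (-t / 2) ≤ e / d := by
  rw [le_div_iff₀ hd]
  calc b ^ (-t / 2) * d ≤ b ^ (-t / 2) * (b ^ t * K) := by gcongr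
    _ = b ^ (-t / 2 + t) * K := by rw [rpow_add hb]; ring
    _ = b ^ (t / 2) * K := by ring_nf
    _ ≤ e := hK

/-- Key estimate for rectangles: if `0 < λ < 1`, `0 < θ₀ < λπ/2` and `m > m_λ` where
`m_λ = (2 / log λ) · log ((2/π) cos (πλ/2))`, then for any angle `θ ∈ (-π/2, π/2)` with
`cos |θ| ≤ sin (λ^(m-1) θ₀)` and any value `fθ` with `cos fθ ≥ cos (πλ/2)`, the
expansion factor satisfies `cos fθ / cos θ ≥ λ^(-m/2)`. -/
theorem rectangle_long_block_expansion (lam θ₀ : ℝ) (m : ℕ) (θ fθ : ℝ)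
    (hlam0 : 0 < lam) (hlam1 : lam < 1)
    (hθ₀ : 0 < θ₀) (hθ₀' : θ₀ < lam * π / 2)
    (hm : (m : ℝ) > 2 / Real.log lam * Real.log (2 / π * Real.cos (π * lam / 2)))
    (hθ : |θ| < π / 2)
    (hcos : Real.cos |θ| ≤ Real.sin (lam ^ (m - 1) * θ₀))
    (hf : Real.cos fθ ≥ Real.cos (π * lam / 2)) :
    Real.cos fθ / Real.cos θ ≥ lam ^ (-(m : ℝ) / 2) := by
  have hθpos : 0 < cos θ := by
    rw [← cos_abs]
    exact cos_pos_of_mem_Ioo ⟨by linarith [abs_nonneg θ], hθ⟩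
  have hθsmall : cos θ ≤ lam ^ (m : ℝ) * (π / 2) := by
    rw [rpow_natCast]
    exact (cos_lt_pow_mul_pi_div_two hlam0 hlam1 hθ₀ hθ₀' hcos).le
  exact rpow_neg_half_le_div hlam0 hθpos hθsmall
    ((rpow_half_mul_pi_div_two_lt_cos hlam0 hlam1 hm).le.trans hf)
end

section
/- For the map φ₀(s) = -(1/β)(s - 1/2) + ε(s) on [0,1), where β = cos(π/d) and ε(s) = 1 if s ≥ 1/2, 0 otherwise, one has for all n ≥ 1: φ₀ⁿ(s) = 1/2 + ((-1)ⁿ/βⁿ)(s - 1/2) + (1/(2β^{n-1}))·∑_{j=0}^{n-1} (-1)^{n-j-1} δ_j(s) β^j, where δ_j(s) = 2ε(φ₀^j(s)) - 1 ∈ {-1, 1}. -/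
open Real Finset

/-- `ε(s) = 1` if `s ≥ 1/2`, and `0` otherwise. -/
noncomputable def slapEps (s : ℝ) : ℝ := if 1 / 2 ≤ s then 1 else 0

/-- The reduced slap map `φ₀(s) = -(1/β)(s - 1/2) + ε(s)`. -/
noncomputable def slapMap (β : ℝ) (s : ℝ) : ℝ := -(1 / β) * (s - 1 / 2) + slapEps s

/-!
Centred at `1/2`, the reduced slap map is affine with a switching constant:
`φ₀(s) - 1/2 = -(1/β)(s - 1/2) + δ(s)/2` with `δ = 2ε - 1`. Unrolling this first-order linear
recurrence along the orbit gives the formula, once `(-1/β)^(n-1-j)` is rewritten as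
`(-1)^(n-j-1) βʲ / β^(n-1)`, which needs `β = cos (π/d) ≠ 0`.
-/

theorem linear_recurrence_eq_sum {R : Type*} [CommSemiring R] (a : R) (x c : ℕ → R)
    (hx : ∀ n, x (n + 1) = a * x n + c n) (n : ℕ) :
    x n = a ^ n * x 0 + ∑ j ∈ range n, a ^ (n - 1 - j) * c j := by
  induction n with
  | zero => simp
  | succ n ih =>
    have hpow : ∀ j ∈ range n, a * (a ^ (n - 1 - j) * c j) = a ^ (n + 1 - 1 - j) * c j := by
      intro j hj
      rw [← mul_assoc, ← pow_succ', show n - 1 - j + 1 = n + 1 - 1 - j by grind]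
    rw [hx, ih, mul_add, ← mul_assoc, ← pow_succ', mul_sum, sum_congr rfl hpow, sum_range_succ,
      show n + 1 - 1 - n = 0 by omega, pow_zero, one_mul, add_assoc]

theorem slapMap_sub_half (β s : ℝ) :
    slapMap β s - 1 / 2 = -(1 / β) * (s - 1 / 2) + (2 * slapEps s - 1) / 2 := by
  rw [slapMap]
  ring

theorem cos_pi_div_pos {x : ℝ} (hx : 2 < x) : 0 < cos (π / x) := by
  have hπx : π / x < π / 2 := div_lt_div_of_pos_left pi_pos two_pos hx
  apply cos_pos_of_mem_Ioo
  constructor <;> linarith [div_pos pi_pos (by linarith : (0 : ℝ) < x), pi_pos]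

theorem slapMap_iterate_eq {β : ℝ} (hβ : β ≠ 0) (s : ℝ) (n : ℕ) :
    (slapMap β)^[n] s =
      1 / 2 + ((-1 : ℝ) ^ n / β ^ n) * (s - 1 / 2) +
        (1 / (2 * β ^ (n - 1))) *
          ∑ j ∈ range n, (-1 : ℝ) ^ (n - j - 1) * (2 * slapEps ((slapMap β)^[j] s) - 1) * β ^ j := by
  have hrec := linear_recurrence_eq_sum (-(1 / β)) (fun n ↦ (slapMap β)^[n] s - 1 / 2)
    (fun n ↦ (2 * slapEps ((slapMap β)^[n] s) - 1) / 2)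
    (fun n ↦ by simp only [Function.iterate_succ_apply', slapMap_sub_half]) n
  have hterm : ∀ j ∈ range n,
      (-(1 / β)) ^ (n - 1 - j) * ((2 * slapEps ((slapMap β)^[j] s) - 1) / 2) =
        1 / (2 * β ^ (n - 1)) *
          ((-1 : ℝ) ^ (n - j - 1) * (2 * slapEps ((slapMap β)^[j] s) - 1) * β ^ j) := by
    intro j hj
    have hsplit : β ^ (n - 1) = β ^ (n - 1 - j) * β ^ j := by
      rw [← pow_add, Nat.sub_add_cancel (by grind)]
    rw [hsplit, ← neg_div, div_pow, Nat.sub_right_comm]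
    field_simp
  rw [sum_congr rfl hterm, ← mul_sum, ← neg_div, div_pow, Function.iterate_zero_apply] at hrec
  linear_combination hrec

theorem slap_iterate_formula_general (d : ℕ) (hd3 : 3 ≤ d) (β : ℝ)
    (hβ : β = Real.cos (π / d)) (s : ℝ) :
    ∀ n : ℕ, 1 ≤ n →
      (slapMap β)^[n] s =
        1 / 2 + ((-1 : ℝ) ^ n / β ^ n) * (s - 1 / 2) +
          (1 / (2 * β ^ (n - 1))) *
            ∑ j ∈ Finset.range n,
              (-1 : ℝ) ^ (n - j - 1) * (2 * slapEps ((slapMap β)^[j] s) - 1) * β ^ j := by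
  have hd : (2 : ℝ) < d := by exact_mod_cast hd3
  intro n _
  exact slapMap_iterate_eq (hβ ▸ (cos_pi_div_pos hd).ne') s n

/-- Iteration formula for the reduced slap map of a regular `d`-gon: for all `n ≥ 1`,
`φ₀ⁿ(s) = 1/2 + ((-1)ⁿ/βⁿ)(s - 1/2) + (1/(2β^(n-1))) ∑_{j<n} (-1)^(n-j-1) δⱼ(s) βʲ`,
where `β = cos (π/d)` and `δⱼ(s) = 2 ε(φ₀ʲ(s)) - 1`. -/
theorem slap_iterate_formula (d : ℕ) (hd : Odd d) (hd3 : 3 ≤ d) (β : ℝ)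
    (hβ : β = Real.cos (π / d)) (s : ℝ) (hs : s ∈ Set.Ico (0 : ℝ) 1) :
    ∀ n : ℕ, 1 ≤ n →
      (slapMap β)^[n] s =
        1 / 2 + ((-1 : ℝ) ^ n / β ^ n) * (s - 1 / 2) +
          (1 / (2 * β ^ (n - 1))) *
            ∑ j ∈ Finset.range n,
              (-1 : ℝ) ^ (n - j - 1) * (2 * slapEps ((slapMap β)^[j] s) - 1) * β ^ j :=
  slap_iterate_formula_general d hd3 β hβ s
end

section
/- Let d ≥ 5 be odd and β = cos(π/d). Then the point s = 1/2 is not pre-periodic under the reduced slap map φ₀(s) = -(1/β)(s - 1/2) + ε(s), where ε(s) = 1 if s ≥ 1/2 and 0 otherwise; i.e., there is no pair n > k ≥ 0 with φ₀ⁿ(1/2) = φ₀ᵏ(1/2). -/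
/-!
Put `u_j = 2 (φ₀ʲ(1/2) - 1/2)`. Then `u_0 = 0` and `u_{j+1} = -u_j / β ± 1`, so
`β^(j-1) u_j` is the value at `β` of an integer polynomial whose coefficients are `±1` in
degrees `< j` and `0` above. A coincidence `φ₀ⁿ(1/2) = φ₀ᵏ(1/2)` with `k < n` therefore makes
`β` a root of a nonzero integer polynomial with coefficients in `[-2, 2]`.

On the other hand `γ = 2β = ζ + ζ⁻¹`, with `ζ = exp (iπ/d)`, is an algebraic unit: for odd
`d`, `ζ²` is a primitive `d`-th root of unity and `(1 + ζ²)⁻¹ = ∑_{i ≤ (d-1)/2} ζ^(4i)`. Its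
degree `m` is at least `2` since `1 < γ < 2`. If `N` is the minimal polynomial of `γ` over `ℤ`,
then `N(2X)` has constant term `±1`, hence is primitive, and it is irreducible over `ℚ`. By
Gauss's lemma it divides in `ℤ[X]` every integer polynomial vanishing at `β`, whose leading
coefficient is therefore divisible by `2^m ≥ 4`.
-/

open Real

open Polynomial Finset

theorem isUnit_coeff_zero_minpoly {K : Type*} [Field K] [CharZero K] {x : K} (hx : IsIntegral ℤ x)
    (hx0 : x ≠ 0) (hx' : IsIntegral ℤ x⁻¹) : IsUnit ((minpoly ℤ x).coeff 0) := by
  let := invertibleOfNonzero (inv_ne_zero hx0)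
  have hroot : aeval x (minpoly ℤ x⁻¹).reverse = 0 := by
    have := (eval₂_reverse_eq_zero_iff (algebraMap ℤ K) x⁻¹ (minpoly ℤ x⁻¹)).2
      (minpoly.aeval ℤ x⁻¹)
    simpa [aeval_def] using this
  obtain ⟨Q, hQ⟩ := minpoly.isIntegrallyClosed_dvd hx hroot
  have h := congrArg (coeff · 0) hQ
  simp only [coeff_zero_reverse, (minpoly.monic hx').leadingCoeff, mul_coeff_zero] at h
  exact IsUnit.of_mul_eq_one _ h.symm

theorem two_pow_natDegree_minpoly_dvd_leadingCoeff {K : Type*} [Field K] [CharZero K] {γ : K}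
    (hγ : IsIntegral ℤ γ) (hunit : IsUnit ((minpoly ℤ γ).coeff 0)) {P : ℤ[X]}
    (hP : aeval (γ / 2) P = 0) : 2 ^ (minpoly ℤ γ).natDegree ∣ P.leadingCoeff := by
  set M := (minpoly ℤ γ).comp (C 2 * X) with hM
  have hMprim : M.IsPrimitive := by
    refine isPrimitive_iff_isUnit_of_C_dvd.2 fun r hr => isUnit_of_dvd_unit ?_ hunit
    simpa only [hM, comp_C_mul_X_coeff, pow_zero, mul_one] using (C_dvd_iff_dvd_coeff r M).1 hr 0
  have hMroot : aeval (γ / 2) M = 0 := by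
    rw [hM, aeval_comp, map_mul, aeval_C, aeval_X, map_ofNat, mul_div_cancel₀ γ two_ne_zero]
    exact minpoly.aeval ℤ γ
  have hMirr : Irreducible (M.map (algebraMap ℤ ℚ)) := by
    let := invertibleOfNonzero (two_ne_zero' ℚ)
    have hN := (minpoly.monic hγ).irreducible_iff_irreducible_map_fraction_map (K := ℚ) |>.1
      (minpoly.irreducible hγ)
    rw [← MulEquiv.irreducible_iff (algEquivCMulXAddC (2 : ℚ) 0)] at hN
    convert hN using 1
    rw [algEquivCMulXAddC_apply, hM, Polynomial.map_comp, ← comp_eq_aeval, map_zero, add_zero,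
      Polynomial.map_mul, map_X, map_C, eq_intCast, Int.cast_ofNat, algebraMap_int_eq]
  have hMP : M ∣ P := by
    refine (hMprim.dvd_iff_fraction_map_dvd_fraction_map ℚ).2 ?_
    rw [minpoly.Irreducible.eq_minpoly hMirr (x := γ / 2) (by rwa [aeval_map_algebraMap]),
      (isUnit_C.2 (leadingCoeff_ne_zero.2 hMirr.ne_zero).isUnit).mul_left_dvd]
    exact minpoly.dvd ℚ _ (by rwa [aeval_map_algebraMap])
  obtain ⟨Q, rfl⟩ := hMP
  rw [leadingCoeff_mul, hM, leadingCoeff_comp (by rw [natDegree_C_mul_X 2 two_ne_zero]; simp),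
    leadingCoeff_C_mul_X, (minpoly.monic hγ).leadingCoeff, one_mul]
  exact dvd_mul_right _ _

theorem inv_one_add_eq_geom_sum_sq {F : Type*} [Field F] {x : F} {t : ℕ}
    (hx : x ^ (2 * t + 1) = 1) (hx1 : x ≠ 1) :
    (1 + x)⁻¹ = ∑ i ∈ range (t + 1), (x ^ 2) ^ i := by
  refine inv_eq_of_mul_eq_one_right (mul_right_cancel₀ (sub_ne_zero.2 hx1) ?_)
  calc (1 + x) * (∑ i ∈ range (t + 1), (x ^ 2) ^ i) * (x - 1)
      = (∑ i ∈ range (t + 1), (x ^ 2) ^ i) * (x ^ 2 - 1) := by ring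
    _ = x * x ^ (2 * t + 1) - 1 := by rw [geom_sum_mul]; ring
    _ = 1 * (x - 1) := by rw [hx]; ring

theorem cos_pi_div_mem_Ioo {d : ℕ} (hd : 3 < d) : cos (π / d) ∈ Set.Ioo (1 / 2) 1 := by
  have hd' : (3 : ℝ) < d := by exact_mod_cast hd
  have hdiv : π / d < π / 3 := div_lt_div_of_pos_left pi_pos (by norm_num) hd'
  have hpos : 0 < π / d := by positivity
  constructor
  · rw [← cos_pi_div_three]
    exact cos_lt_cos_of_nonneg_of_le_pi hpos.le (by linarith [pi_pos]) hdiv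
  · rw [← cos_zero]
    exact cos_lt_cos_of_nonneg_of_le_pi le_rfl (by linarith [pi_pos]) hpos

theorem isIntegral_inv_two_mul_cos_pi_div {d : ℕ} (hd : Odd d) (hd1 : 1 < d) :
    IsIntegral ℤ (2 * cos (π / d))⁻¹ := by
  obtain ⟨t, rfl⟩ := hd
  set ζ : ℂ := Complex.exp (((1 / (2 * t + 1 : ℕ) : ℚ) : ℂ) * π * Complex.I)
  have hζ : IsIntegral ℤ ζ := Complex.isIntegral_exp_rat_mul_pi_mul_I _
  have hprim : IsPrimitiveRoot (ζ ^ 2) (2 * t + 1) := by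
    convert Complex.isPrimitiveRoot_exp (2 * t + 1) (by omega) using 1
    rw [← Complex.exp_nat_mul]
    push_cast
    ring_nf
  have hcos : ((2 * cos (π / (2 * t + 1 : ℕ)) : ℝ) : ℂ) = ζ⁻¹ * (1 + ζ ^ 2) := by
    rw [mul_add, mul_one, pow_two, inv_mul_cancel_left₀ (Complex.exp_ne_zero _), ← Complex.exp_neg,
      Complex.ofReal_mul, Complex.ofReal_cos, Complex.ofReal_ofNat, Complex.two_cos, add_comm]
    simp only [ζ]
    push_cast
    ring_nf
  rw [← isIntegral_algebraMap_iff (A := ℝ) (B := ℂ) Complex.ofReal_injective]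
  change IsIntegral ℤ (((2 * cos (π / (2 * t + 1 : ℕ)))⁻¹ : ℝ) : ℂ)
  rw [Complex.ofReal_inv, hcos, mul_inv, inv_inv,
    inv_one_add_eq_geom_sum_sq hprim.pow_eq_one (hprim.ne_one (by omega))]
  exact hζ.mul (IsIntegral.sum _ fun i _ => ((hprim.isIntegral (by omega)).pow 2).pow i)

theorem aeval_cos_pi_div_ne_zero {d : ℕ} (hd : Odd d) (hd5 : 5 ≤ d) {P : ℤ[X]} (hP : P ≠ 0)
    (hcoeff : ∀ i, |P.coeff i| ≤ 2) : aeval (cos (π / d)) P ≠ 0 := by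
  intro hroot
  set γ := 2 * cos (π / d) with hγ_def
  obtain ⟨hγ1, hγ2⟩ : 1 < γ ∧ γ < 2 := by
    have := cos_pi_div_mem_Ioo (d := d) (by omega)
    constructor <;> linarith [this.1, this.2]
  have hγ : IsIntegral ℤ γ := by
    have h := isIntegral_two_mul_cos_rat_mul_pi (1 / d)
    rwa [show ((1 / d : ℚ) : ℝ) * π = π / d by push_cast; ring] at h
  have hunit := isUnit_coeff_zero_minpoly hγ (by positivity)
    (isIntegral_inv_two_mul_cos_pi_div hd (by omega))
  have hdeg : 2 ≤ (minpoly ℤ γ).natDegree := by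
    refine (minpoly.two_le_natDegree_iff hγ).2 ?_
    rintro ⟨m, hm⟩
    rw [eq_intCast] at hm
    have h1 : (1 : ℝ) < m := hm ▸ hγ1
    have h2 : (m : ℝ) < 2 := hm ▸ hγ2
    norm_cast at h1 h2
    omega
  have h4 : 4 ∣ P.leadingCoeff := (pow_dvd_pow 2 hdeg).trans <|
    two_pow_natDegree_minpoly_dvd_leadingCoeff hγ hunit
      (by rwa [hγ_def, mul_div_cancel_left₀ _ two_ne_zero])
  have hlead := abs_le.1 (hcoeff P.natDegree)
  have hne := leadingCoeff_ne_zero.2 hP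
  rw [leadingCoeff] at h4 hne
  omega

noncomputable def slapSign (s : ℝ) : ℤ := if 1 / 2 ≤ s then 1 else -1

noncomputable def slapPoly (β : ℝ) : ℕ → ℤ[X]
  | 0 => 0
  | n + 1 => -slapPoly β n + C (slapSign ((slapMap β)^[n] (1 / 2))) * X ^ n

theorem abs_coeff_slapPoly (β : ℝ) (n i : ℕ) :
    |(slapPoly β n).coeff i| = if i < n then 1 else 0 := by
  induction n with
  | zero => simp [slapPoly]
  | succ n ih =>
    rw [slapPoly, coeff_add, coeff_neg, coeff_C_mul_X_pow]
    rcases lt_trichotomy i n with h | rfl | h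
    · rw [if_neg h.ne, add_zero, abs_neg, ih, if_pos h, if_pos (by omega)]
    · rw [if_neg (lt_irrefl i), abs_eq_zero] at ih
      simp [ih, slapSign, apply_ite]
    · rw [if_neg h.ne', add_zero, abs_neg, ih, if_neg (by omega), if_neg (by omega)]

theorem mul_aeval_slapPoly (β : ℝ) (hβ : β ≠ 0) (n : ℕ) :
    β * aeval β (slapPoly β n) = 2 * β ^ n * ((slapMap β)^[n] (1 / 2) - 1 / 2) := by
  induction n with
  | zero => simp [slapPoly]
  | succ n ih =>
    have hsign (s : ℝ) : (slapSign s : ℝ) = 2 * slapEps s - 1 := by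
      unfold slapSign slapEps; split_ifs <;> norm_num
    rw [slapPoly, map_add, map_neg, map_mul, aeval_C, map_pow, aeval_X, mul_add, mul_neg, ih,
      Function.iterate_succ_apply', slapMap, algebraMap_int_eq, eq_intCast, hsign]
    field_simp
    ring

theorem exists_aeval_eq_zero_of_iterate_eq {β : ℝ} (hβ : β ≠ 0) {n k : ℕ} (hkn : k < n)
    (h : (slapMap β)^[n] (1 / 2) = (slapMap β)^[k] (1 / 2)) :
    ∃ P : ℤ[X], P ≠ 0 ∧ (∀ i, |P.coeff i| ≤ 2) ∧ aeval β P = 0 := by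
  refine ⟨slapPoly β n - slapPoly β k * X ^ (n - k), ?_, fun i => ?_, ?_⟩
  · have hcoeff0 : |(slapPoly β n - slapPoly β k * X ^ (n - k)).coeff 0| = 1 := by
      rw [coeff_sub, coeff_mul_X_pow', if_neg (by omega), sub_zero, abs_coeff_slapPoly,
        if_pos (by omega)]
    exact fun hP => by simp [hP] at hcoeff0
  · rw [coeff_sub, coeff_mul_X_pow']
    have hk : |(slapPoly β k).coeff (i - (n - k))| ≤ 1 := by
      rw [abs_coeff_slapPoly]; split_ifs <;> norm_num
    have hn : |(slapPoly β n).coeff i| ≤ 1 := by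
      rw [abs_coeff_slapPoly]; split_ifs <;> norm_num
    split_ifs
    · exact (abs_sub _ _).trans (by linarith)
    · simpa using hn.trans one_le_two
  · refine (mul_eq_zero.1 ?_).resolve_left hβ
    have hpow : β ^ n = β ^ (n - k) * β ^ k := by rw [← pow_add, Nat.sub_add_cancel hkn.le]
    have hn := mul_aeval_slapPoly β hβ n
    have hk := mul_aeval_slapPoly β hβ k
    rw [h] at hn
    rw [map_sub, map_mul, map_pow, aeval_X]
    linear_combination hn - β ^ (n - k) * hk + 2 * ((slapMap β)^[k] (1 / 2) - 1 / 2) * hpow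

/-- For an odd `d ≥ 5` and `β = cos (π/d)`, the point `s = 1/2` is not pre-periodic
under the reduced slap map: there is no pair `n > k ≥ 0` with `φ₀ⁿ(1/2) = φ₀ᵏ(1/2)`. -/
theorem slap_half_not_preperiodic (d : ℕ) (hd : Odd d) (hd5 : 5 ≤ d) (β : ℝ)
    (hβ : β = Real.cos (π / d)) :
    ∀ n k : ℕ, k < n → (slapMap β)^[n] (1 / 2) ≠ (slapMap β)^[k] (1 / 2) := by
  intro n k hkn h
  have hβ0 : β ≠ 0 := by
    have := cos_pi_div_mem_Ioo (d := d) (by omega)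
    rw [hβ]; linarith [this.1]
  obtain ⟨P, hP, hcoeff, hroot⟩ := exists_aeval_eq_zero_of_iterate_eq hβ0 hkn h
  exact aeval_cos_pi_div_ne_zero hd hd5 hP hcoeff (hβ ▸ hroot)
end

section
/- Let F(x) ∈ ℤ[x] be a polynomial with coefficients in {-2,-1,0,1,2}, with F(0) = ±1 and leading coefficient in {±1, ±2}. Let p(x) ∈ ℤ[x] be a polynomial with constant term ±1 and leading coefficient ≥ 4. Then p does not divide F in ℚ[x] (unless F = 0). -/
open Polynomial

theorem Polynomial.isPrimitive_of_isUnit_coeff_zero {R : Type*} [CommSemiring R] {q : R[X]}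
    (h : IsUnit (q.coeff 0)) : q.IsPrimitive :=
  isPrimitive_iff_isUnit_of_C_dvd.mpr fun r hr =>
    isUnit_of_dvd_unit ((C_dvd_iff_dvd_coeff r q).mp hr 0) h

/-- Gauss's lemma: the cofactor of a primitive divisor is already integral. -/
theorem Polynomial.IsPrimitive.Int.leadingCoeff_dvd_of_map_cast_dvd {p F : ℤ[X]}
    (hp : p.IsPrimitive) (h : p.map (Int.castRingHom ℚ) ∣ F.map (Int.castRingHom ℚ)) :
    p.leadingCoeff ∣ F.leadingCoeff :=
  leadingCoeff_dvd_leadingCoeff ((IsPrimitive.Int.dvd_iff_map_cast_dvd_map_cast p F hp).mpr h)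

theorem no_small_multiple_general (F p : Polynomial ℤ)
    (hFlead : F.leadingCoeff ∈ ({-2, -1, 1, 2} : Set ℤ))
    (hp0 : p.coeff 0 = 1 ∨ p.coeff 0 = -1)
    (hplead : 4 ≤ p.leadingCoeff) :
    ¬ (p.map (Int.castRingHom ℚ) ∣ F.map (Int.castRingHom ℚ)) := by
  intro hdvd
  have hp : p.IsPrimitive := isPrimitive_of_isUnit_coeff_zero (Int.isUnit_iff.mpr hp0)
  have hlead : p.leadingCoeff ∣ F.leadingCoeff :=
    IsPrimitive.Int.leadingCoeff_dvd_of_map_cast_dvd hp hdvd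
  have hsmall : |F.leadingCoeff| < p.leadingCoeff := by
    rcases hFlead with h | h | h | h <;> rw [h] <;> norm_num <;> omega
  have hzero : F.leadingCoeff = 0 := Int.eq_zero_of_abs_lt_dvd hlead hsmall
  rcases hFlead with h | h | h | h <;> rw [h] at hzero <;> norm_num at hzero

/-- Divisibility obstruction: a polynomial `F ∈ ℤ[x]` with coefficients in
`{-2,-1,0,1,2}`, constant term `±1` and leading coefficient in `{±1, ±2}` cannot be
divisible in `ℚ[x]` by a polynomial `p ∈ ℤ[x]` with constant term `±1` and leading
coefficient at least `4`. -/
theorem no_small_multiple (F p : Polynomial ℤ)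
    (hFcoeff : ∀ i, F.coeff i ∈ ({-2, -1, 0, 1, 2} : Set ℤ))
    (hF0 : F.coeff 0 = 1 ∨ F.coeff 0 = -1)
    (hFlead : F.leadingCoeff ∈ ({-2, -1, 1, 2} : Set ℤ))
    (hp0 : p.coeff 0 = 1 ∨ p.coeff 0 = -1)
    (hplead : 4 ≤ p.leadingCoeff) :
    ¬ (p.map (Int.castRingHom ℚ) ∣ F.map (Int.castRingHom ℚ)) :=
  no_small_multiple_general F p hFlead hp0 hplead
end

section
/- Every periodic point of period two of the contracting polygonal billiard map is parabolic: if (s₀, θ₀) has Φ²(s₀,θ₀) = (s₀,θ₀) with two distinct collisions, then θ₀ = 0, the corresponding trajectory hits two parallel sides perpendicularly, and the expansion factor α₂(s₀,θ₀) = ∏ cos θ_i / cos θ̄_{i+1} equals 1, so one eigenvalue of DΦ² has absolute value 1. -/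
/-!
A period-two orbit closes after two flights with unit velocities and positive flight times,
which forces the second flight to retrace the first: `v₁ = -v₀`. Reflecting the reversed
outgoing direction in each side shows that the incidence angle is the negative of the outgoing
one, `θ̄ = -θ`, so the reflection law reads `θ = f(-θ)`; since `|f x| ≤ λ|x|` with `λ < 1`,
every angle vanishes. Both velocities are then the side normals; as they are opposite, the sides
are parallel. Every cosine in `α₂` equals `1`, so `(1, 0)` is fixed by the upper triangular `DΦ²`.
-/

open Real

/-- Rotation by `π/2`: the inward unit normal to a side with unit tangent `u`. -/
def sideNormal (u : ℝ × ℝ) : ℝ × ℝ := (-u.2, u.1)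

/-- An orbit of a polygonal billiard with reflection law `f`, recorded through its
collision points `q i`, the unit tangent `u i` of the side at the `i`-th collision,
the post-collision unit velocity `v i`, the outgoing angle `θ i` and the incidence
angle `θbar i` of the `i`-th collision (for `i ≥ 1`).  The velocity satisfies
`v = sin θ · u + cos θ · Ju`, the incidence angle is the angle of the specularly
reflected incoming direction `-v + 2⟨u, v⟩u`, the reflection law gives `θ = f(θbar)`,
and retracing a segment backwards returns to the previous collision point. -/
structure BilliardOrbit (f : ℝ → ℝ) : Type where
  q : ℕ → ℝ × ℝ
  u : ℕ → ℝ × ℝ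
  v : ℕ → ℝ × ℝ
  θ : ℕ → ℝ
  θbar : ℕ → ℝ
  hu : ∀ i, (u i).1 ^ 2 + (u i).2 ^ 2 = 1
  hθ : ∀ i, θ i ∈ Set.Ioo (-(π / 2)) (π / 2)
  hθbar : ∀ i, θbar i ∈ Set.Ioo (-(π / 2)) (π / 2)
  hrefl : ∀ i, θ i = f (θbar i)
  hflight : ∀ i, ∃ t : ℝ, 0 < t ∧ q (i + 1) = q i + t • v i
  hv : ∀ i, v i = Real.sin (θ i) • u i + Real.cos (θ i) • sideNormal (u i)
  hincid : ∀ i,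
    -(v i) + (2 * ((u (i + 1)).1 * (v i).1 + (u (i + 1)).2 * (v i).2)) • u (i + 1) =
      Real.sin (θbar (i + 1)) • u (i + 1) + Real.cos (θbar (i + 1)) • sideNormal (u (i + 1))
  hback : ∀ i, v (i + 1) = -(v i) → q (i + 2) = q i

def reflectAcross (u w : ℝ × ℝ) : ℝ × ℝ := -w + (2 * (u.1 * w.1 + u.2 * w.2)) • u

section Plane

variable {u : ℝ × ℝ}

lemma sideNormal_neg : sideNormal (-u) = -sideNormal u := rfl

lemma sideNormal_injective : Function.Injective sideNormal := fun a b h => by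
  simp only [sideNormal, Prod.mk.injEq, neg_inj] at h
  exact Prod.ext h.2 h.1

lemma normSq_smul_add_smul_sideNormal (s c : ℝ) :
    (s • u + c • sideNormal u).1 ^ 2 + (s • u + c • sideNormal u).2 ^ 2 =
      (s ^ 2 + c ^ 2) * (u.1 ^ 2 + u.2 ^ 2) := by
  simp only [sideNormal, Prod.fst_add, Prod.snd_add, Prod.smul_fst, Prod.smul_snd, smul_eq_mul]
  ring

lemma smul_add_smul_sideNormal_inj {s c s' c' : ℝ} (hu : u.1 ^ 2 + u.2 ^ 2 = 1)
    (h : s • u + c • sideNormal u = s' • u + c' • sideNormal u) : s = s' ∧ c = c' := by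
  have h1 := congrArg Prod.fst h
  have h2 := congrArg Prod.snd h
  simp only [sideNormal, Prod.fst_add, Prod.snd_add, Prod.smul_fst, Prod.smul_snd,
    smul_eq_mul] at h1 h2
  constructor
  · linear_combination u.1 * h1 + u.2 * h2 - (s - s') * hu
  · linear_combination -u.2 * h1 + u.1 * h2 - (c - c') * hu

lemma reflectAcross_neg_smul_add_smul_sideNormal (hu : u.1 ^ 2 + u.2 ^ 2 = 1) (s c : ℝ) :
    reflectAcross u (-(s • u + c • sideNormal u)) = (-s) • u + c • sideNormal u := by
  ext <;>
    simp only [reflectAcross, sideNormal, Prod.fst_add, Prod.snd_add, Prod.fst_neg,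
      Prod.snd_neg, Prod.smul_fst, Prod.smul_snd, smul_eq_mul]
  · linear_combination -2 * s * u.1 * hu
  · linear_combination -2 * s * u.2 * hu

lemma eq_neg_of_smul_add_smul_eq_zero {a b : ℝ × ℝ} {s t : ℝ}
    (ha : a.1 ^ 2 + a.2 ^ 2 = 1) (hb : b.1 ^ 2 + b.2 ^ 2 = 1) (hs : 0 < s) (ht : 0 < t)
    (h : s • a + t • b = 0) : b = -a := by
  have h1 := congrArg Prod.fst h
  have h2 := congrArg Prod.snd h
  simp only [Prod.fst_add, Prod.snd_add, Prod.smul_fst, Prod.smul_snd, smul_eq_mul,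
    Prod.fst_zero, Prod.snd_zero] at h1 h2
  have hst : s = t := by
    have hsq : s ^ 2 = t ^ 2 := by
      linear_combination -s ^ 2 * ha + t ^ 2 * hb + (s * a.1 - t * b.1) * h1
        + (s * a.2 - t * b.2) * h2
    nlinarith
  subst hst
  rw [← smul_add, smul_eq_zero] at h
  exact (neg_eq_of_add_eq_zero_right (h.resolve_left hs.ne')).symm

end Plane

lemma eq_zero_of_eq_apply_neg {f : ℝ → ℝ} {lam r x : ℝ} (hlam : lam < 1)
    (hfc : ∀ x : ℝ, |x| < r → |f x| ≤ lam * |x|) (hx : |x| < r) (h : x = f (-x)) : x = 0 := by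
  have hle : |x| ≤ lam * |x| := by simpa [← h] using hfc (-x) (by rwa [abs_neg])
  exact abs_eq_zero.1 (by nlinarith [abs_nonneg x])

lemma exists_ne_zero_mulVec_eq_self {R : Type*} [Semiring R] [Nontrivial R] (γ β : R) :
    ∃ w : Fin 2 → R, w ≠ 0 ∧ Matrix.mulVec !![1, γ; 0, β] w = w :=
  ⟨![1, 0], fun h => one_ne_zero (congrFun h 0), by ext i; fin_cases i <;> simp⟩

namespace BilliardOrbit

variable {f : ℝ → ℝ} (O : BilliardOrbit f) {i : ℕ}

lemma v_normSq (i : ℕ) : (O.v i).1 ^ 2 + (O.v i).2 ^ 2 = 1 := by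
  rw [O.hv i, normSq_smul_add_smul_sideNormal, sin_sq_add_cos_sq, O.hu i, one_mul]

lemma v_eq_sideNormal_of_θ_eq_zero (h : O.θ i = 0) : O.v i = sideNormal (O.u i) := by
  simp [O.hv i, h]

lemma v_succ_eq_neg_of_q_add_two (h : O.q (i + 2) = O.q i) : O.v (i + 1) = -O.v i := by
  obtain ⟨s, hs, hq₁⟩ := O.hflight i
  obtain ⟨t, ht, hq₂⟩ := O.hflight (i + 1)
  refine eq_neg_of_smul_add_smul_eq_zero (O.v_normSq i) (O.v_normSq (i + 1)) hs ht ?_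
  refine add_left_cancel (a := O.q i) ?_
  rw [add_zero, ← add_assoc, ← hq₁, ← hq₂, h]

lemma θbar_succ_eq_neg_of_q_add_two (h : O.q (i + 2) = O.q i) :
    O.θbar (i + 1) = -O.θ (i + 1) := by
  have hincid : reflectAcross (O.u (i + 1)) (O.v i) = _ := O.hincid i
  rw [← neg_neg (O.v i), ← O.v_succ_eq_neg_of_q_add_two h, O.hv (i + 1),
    reflectAcross_neg_smul_add_smul_sideNormal (O.hu (i + 1))] at hincid
  have hsin := (smul_add_smul_sideNormal_inj (O.hu (i + 1)) hincid).1
  have hθ := O.hθ (i + 1)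
  have hθbar := O.hθbar (i + 1)
  refine injOn_sin ⟨hθbar.1.le, hθbar.2.le⟩ ⟨by linarith [hθ.2], by linarith [hθ.1]⟩ ?_
  rw [sin_neg, hsin]

lemma θ_succ_eq_zero_of_q_add_two {lam : ℝ} (hlam : lam < 1)
    (hfc : ∀ x : ℝ, |x| < π / 2 → |f x| ≤ lam * |x|) (h : O.q (i + 2) = O.q i) :
    O.θ (i + 1) = 0 := by
  refine eq_zero_of_eq_apply_neg hlam hfc (abs_lt.2 (O.hθ (i + 1))) ?_
  rw [← O.θbar_succ_eq_neg_of_q_add_two h]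
  exact O.hrefl _

end BilliardOrbit

theorem period_two_parabolic_general (f : ℝ → ℝ) (lam : ℝ)
    (hlam1 : lam < 1)
    (hfc : ∀ x : ℝ, |x| < π / 2 → |f x| ≤ lam * |x|)
    (O : BilliardOrbit f)
    (hper : ∀ i, O.q (i + 2) = O.q i ∧ O.v (i + 2) = O.v i ∧ O.u (i + 2) = O.u i ∧
      O.θ (i + 2) = O.θ i ∧ O.θbar (i + 2) = O.θbar i) :
    O.θ 0 = 0 ∧ O.θ 1 = 0 ∧ O.θbar 1 = 0 ∧ O.θbar 2 = 0 ∧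
    (O.u 1 = O.u 0 ∨ O.u 1 = -(O.u 0)) ∧
    (Real.cos (O.θ 0) / Real.cos (O.θbar 2)) * (Real.cos (O.θ 1) / Real.cos (O.θbar 1)) = 1 ∧
    (∀ γ β : ℝ, ∃ w : Fin 2 → ℝ, w ≠ 0 ∧
      Matrix.mulVec
        !![(Real.cos (O.θ 0) / Real.cos (O.θbar 2)) *
            (Real.cos (O.θ 1) / Real.cos (O.θbar 1)), γ; 0, β] w = w) := by
  have hq₂ : O.q 2 = O.q 0 := (hper 0).1
  have hq₃ : O.q 3 = O.q 1 := (hper 1).1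
  have hθ₂ : O.θ 2 = O.θ 0 := (hper 0).2.2.2.1
  have hθ1 : O.θ 1 = 0 := O.θ_succ_eq_zero_of_q_add_two hlam1 hfc hq₂
  have hθ0 : O.θ 0 = 0 := hθ₂ ▸ O.θ_succ_eq_zero_of_q_add_two hlam1 hfc hq₃
  have hθbar1 : O.θbar 1 = 0 := by
    rw [O.θbar_succ_eq_neg_of_q_add_two hq₂, hθ1, neg_zero]
  have hθbar2 : O.θbar 2 = 0 := by
    rw [O.θbar_succ_eq_neg_of_q_add_two hq₃, hθ₂, hθ0, neg_zero]
  have hα : (Real.cos (O.θ 0) / Real.cos (O.θbar 2)) *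
      (Real.cos (O.θ 1) / Real.cos (O.θbar 1)) = 1 := by
    simp [hθ0, hθ1, hθbar1, hθbar2]
  refine ⟨hθ0, hθ1, hθbar1, hθbar2, Or.inr (sideNormal_injective ?_), hα,
    fun γ β => hα ▸ exists_ne_zero_mulVec_eq_self γ β⟩
  rw [sideNormal_neg, ← O.v_eq_sideNormal_of_θ_eq_zero hθ0,
    ← O.v_eq_sideNormal_of_θ_eq_zero hθ1, O.v_succ_eq_neg_of_q_add_two hq₂]

/-- Period-two orbits of a contracting polygonal billiard are parabolic: the two
collisions are perpendicular (`θ₀ = 0` and all incidence angles vanish), the two sides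
are parallel, the expansion factor `α₂ = (cos θ₀ / cos θ̄₂)(cos θ₁ / cos θ̄₁)` is `1`,
and hence `DΦ² = [[α₂, γ],[0, β]]` has an eigenvalue of absolute value `1`. -/
theorem period_two_parabolic (f : ℝ → ℝ) (lam : ℝ)
    (hlam0 : 0 ≤ lam) (hlam1 : lam < 1) (hf0 : f 0 = 0)
    (hfc : ∀ x : ℝ, |x| < π / 2 → |f x| ≤ lam * |x|)
    (O : BilliardOrbit f)
    (hper : ∀ i, O.q (i + 2) = O.q i ∧ O.v (i + 2) = O.v i ∧ O.u (i + 2) = O.u i ∧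
      O.θ (i + 2) = O.θ i ∧ O.θbar (i + 2) = O.θbar i)
    (hdist : O.q 1 ≠ O.q 0) :
    O.θ 0 = 0 ∧ O.θ 1 = 0 ∧ O.θbar 1 = 0 ∧ O.θbar 2 = 0 ∧
    (O.u 1 = O.u 0 ∨ O.u 1 = -(O.u 0)) ∧
    (Real.cos (O.θ 0) / Real.cos (O.θbar 2)) * (Real.cos (O.θ 1) / Real.cos (O.θbar 1)) = 1 ∧
    (∀ γ β : ℝ, ∃ w : Fin 2 → ℝ, w ≠ 0 ∧
      Matrix.mulVec
        !![(Real.cos (O.θ 0) / Real.cos (O.θbar 2)) *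
            (Real.cos (O.θ 1) / Real.cos (O.θbar 1)), γ; 0, β] w = w) :=
  period_two_parabolic_general f lam hlam1 hfc O hper
end

section
/- Let 0 ≤ λ_q ≤ 1/2, and suppose f satisfies f(δπ/q) ≤ δ·f(π/q) for 0 ≤ δ ≤ 1 with f(π/q) = λ_q·π/q. Set θ̂ = (π/q)(1 − λ_q). Then for all n ≥ 0, f^{n+1}(θ̂) ≤ (π/q)·λ_q^{n+1}(1 − λ_q), hence by convexity of tan on [0, π/2), tan(f^{n+1}(θ̂)) ≤ 2 tan(π/(2q))·λ_q^{n+1}(1 − λ_q), and therefore cot(π/(2q))·∑_{n=0}^∞ tan(f^{n+1}(θ̂)) ≤ 2λ_q ≤ 1. -/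
/-!
Monotonicity of `f` on `[0, π/q]` and `f (δ π/q) ≤ δ λ π/q` make `f` map `[0, δ π/q]` into
`[0, λ δ π/q]`, so the orbit of `θ̂ = (1 - λ) π/q` satisfies
`0 ≤ f^[n+1] θ̂ ≤ λ^(n+1) (1 - λ) π/q ≤ π/(2q)`. Convexity of `tan` on `[0, π/2)` together with
`tan 0 = 0` gives `tan (t a) ≤ t tan a` for `t ∈ [0, 1]`, so the tangents of the orbit are
dominated by the series `2 tan (π/(2q)) λ^(n+1) (1 - λ)`, which sums to `2 tan (π/(2q)) λ`.
-/

open Real Set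

theorem ConvexOn.map_smul_le_smul {𝕜 E β : Type*} [Ring 𝕜] [LinearOrder 𝕜] [IsStrictOrderedRing 𝕜]
    [AddCommMonoid E] [Module 𝕜 E] [AddCommMonoid β] [PartialOrder β] [IsOrderedAddMonoid β]
    [Module 𝕜 β] {s : Set E} {f : E → β} (hf : ConvexOn 𝕜 s f) (h0 : (0 : E) ∈ s) (hf0 : f 0 = 0)
    {x : E} (hx : x ∈ s) {t : 𝕜} (ht0 : 0 ≤ t) (ht1 : t ≤ 1) : f (t • x) ≤ t • f x := by
  simpa [hf0] using hf.2 h0 hx (sub_nonneg.2 ht1) ht0 (sub_add_cancel 1 t)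

namespace Real

theorem convexOn_tan : ConvexOn ℝ (Ico 0 (π / 2)) tan := by
  have hIoo : Ioo 0 (π / 2) ⊆ Ioo (-(π / 2)) (π / 2) := Ioo_subset_Ioo_left (by linarith [pi_pos])
  refine MonotoneOn.convexOn_of_deriv (convex_Ico 0 (π / 2)) ?_ ?_ ?_
  · exact continuousOn_tan_Ioo.mono (Ico_subset_Ioo_left (by linarith [pi_pos]))
  · rw [interior_Ico]
    exact fun x hx => (differentiableAt_tan_of_mem_Ioo (hIoo hx)).differentiableWithinAt
  · rw [interior_Ico]
    intro x hx y hy hxy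
    have hcos : cos y ≤ cos x :=
      cos_le_cos_of_nonneg_of_le_pi hx.1.le (by linarith [hy.2, pi_pos]) hxy
    have hcy : 0 < cos y := cos_pos_of_mem_Ioo (hIoo hy)
    simp only [deriv_tan]
    exact one_div_le_one_div_of_le (by positivity) (pow_le_pow_left₀ hcy.le hcos 2)

theorem mapsTo_tan_Icc_mul {a t : ℝ} (ha0 : 0 ≤ a) (ha : a < π / 2) (ht0 : 0 ≤ t) (ht1 : t ≤ 1) :
    MapsTo tan (Icc 0 (t * a)) (Icc 0 (t * tan a)) := by
  intro x hx
  have hta : t * a ≤ a := mul_le_of_le_one_left ha0 ht1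
  have hx_lt : x < π / 2 := by linarith [hx.2]
  refine ⟨tan_nonneg_of_nonneg_of_le_pi_div_two hx.1 hx_lt.le, ?_⟩
  calc tan x ≤ tan (t * a) :=
        strictMonoOn_tan.monotoneOn ⟨by linarith [pi_pos, hx.1], hx_lt⟩
          ⟨by linarith [pi_pos, hx.1, hx.2], by linarith⟩ hx.2
    _ ≤ t * tan a :=
        convexOn_tan.map_smul_le_smul ⟨le_rfl, by linarith [pi_pos]⟩ tan_zero ⟨ha0, ha⟩ ht0 ht1

end Real

theorem pow_succ_mul_one_sub_le_quarter {r : ℝ} (h0 : 0 ≤ r) (h1 : r ≤ 1) (n : ℕ) :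
    r ^ (n + 1) * (1 - r) ≤ 1 / 4 := by
  have hpow : r ^ (n + 1) ≤ r := pow_le_of_le_one h0 h1 (by omega)
  nlinarith [sq_nonneg (r - 1 / 2)]

theorem hasSum_pow_succ_mul_one_sub {r : ℝ} (h0 : 0 ≤ r) (h1 : r < 1) :
    HasSum (fun n : ℕ => r ^ (n + 1) * (1 - r)) r := by
  have h := (hasSum_geometric_of_lt_one h0 h1).mul_left (r * (1 - r))
  rw [mul_assoc, mul_inv_cancel₀ (sub_ne_zero.2 h1.ne'), mul_one] at h
  have hterm : (fun n : ℕ => r ^ (n + 1) * (1 - r)) = fun n => r * (1 - r) * r ^ n := by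
    funext n
    ring
  rwa [hterm]

section Subhomogeneous

variable {f : ℝ → ℝ} {α lam : ℝ}

theorem mapsTo_Icc_of_scale_le (hα : 0 ≤ α) (hmono : MonotoneOn f (Icc 0 α))
    (hpos : ∀ x ∈ Icc 0 α, 0 ≤ f x) (hscale : ∀ δ : ℝ, 0 ≤ δ → δ ≤ 1 → f (δ * α) ≤ δ * f α)
    {δ : ℝ} (hδ0 : 0 ≤ δ) (hδ1 : δ ≤ 1) : MapsTo f (Icc 0 (δ * α)) (Icc 0 (δ * f α)) := by
  intro x hx
  have hδα : δ * α ∈ Icc 0 α := ⟨mul_nonneg hδ0 hα, mul_le_of_le_one_left hα hδ1⟩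
  have hxα : x ∈ Icc 0 α := ⟨hx.1, hx.2.trans hδα.2⟩
  exact ⟨hpos x hxα, (hmono hxα hδα hx.2).trans (hscale δ hδ0 hδ1)⟩

theorem mapsTo_iterate_Icc_of_scale_le (hα : 0 ≤ α) (hmono : MonotoneOn f (Icc 0 α))
    (hpos : ∀ x ∈ Icc 0 α, 0 ≤ f x) (hscale : ∀ δ : ℝ, 0 ≤ δ → δ ≤ 1 → f (δ * α) ≤ δ * f α)
    (hfα : f α = lam * α) (hlam0 : 0 ≤ lam) (hlam1 : lam ≤ 1) {δ : ℝ} (hδ0 : 0 ≤ δ)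
    (hδ1 : δ ≤ 1) (n : ℕ) : MapsTo f^[n] (Icc 0 (δ * α)) (Icc 0 (lam ^ n * δ * α)) := by
  induction n with
  | zero => simpa using mapsTo_id _
  | succ n ih =>
    have hstep := mapsTo_Icc_of_scale_le hα hmono hpos hscale
      (mul_nonneg (pow_nonneg hlam0 n) hδ0) (mul_le_one₀ (pow_le_one₀ hlam0 hlam1) hδ0 hδ1)
    rw [Function.iterate_succ', show lam ^ (n + 1) * δ * α = lam ^ n * δ * f α by rw [hfα]; ring]
    exact hstep.comp ih

end Subhomogeneous

/-- The trapping estimate for even regular polygons: with `f(π/q) = λ_q·π/q`,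
`0 ≤ λ_q ≤ 1/2`, `f(δπ/q) ≤ δ f(π/q)` for `0 ≤ δ ≤ 1`, and `θ̂ = (π/q)(1 − λ_q)`, one
has `f^(n+1)(θ̂) ≤ (π/q) λ_q^(n+1) (1 − λ_q)` for all `n ≥ 0`, hence by convexity of
`tan` the bound `tan (f^(n+1)(θ̂)) ≤ 2 tan (π/(2q)) λ_q^(n+1) (1 − λ_q)`, and therefore
`cot (π/(2q)) ∑ₙ tan (f^(n+1)(θ̂)) ≤ 2 λ_q ≤ 1`. -/
theorem even_polygon_trapping (q : ℕ) (hq : 3 ≤ q) (f : ℝ → ℝ) (lamq : ℝ)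
    (hlamq0 : 0 ≤ lamq) (hlamq : lamq ≤ 1 / 2)
    (hval : f (π / q) = lamq * (π / q))
    (hscale : ∀ δ : ℝ, 0 ≤ δ → δ ≤ 1 → f (δ * (π / q)) ≤ δ * f (π / q))
    (hpos : ∀ x ∈ Set.Icc (0 : ℝ) (π / q), 0 ≤ f x)
    (hmono : MonotoneOn f (Set.Icc (0 : ℝ) (π / q))) :
    (∀ n : ℕ, f^[n + 1] (π / q * (1 - lamq)) ≤ π / q * lamq ^ (n + 1) * (1 - lamq)) ∧
    (∀ n : ℕ, Real.tan (f^[n + 1] (π / q * (1 - lamq))) ≤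
      2 * Real.tan (π / (2 * q)) * lamq ^ (n + 1) * (1 - lamq)) ∧
    Summable (fun n : ℕ => Real.tan (f^[n + 1] (π / q * (1 - lamq)))) ∧
    (Real.tan (π / (2 * q)))⁻¹ *
        ∑' n : ℕ, Real.tan (f^[n + 1] (π / q * (1 - lamq))) ≤ 2 * lamq ∧
    2 * lamq ≤ 1 := by
  have hq1 : (1 : ℝ) < q := by exact_mod_cast (by omega : 1 < q)
  have hα : 0 < π / q := by positivity
  have ha0 : 0 < π / (2 * q) := by positivity
  have ha : π / (2 * q) < π / 2 := div_lt_div_of_pos_left pi_pos two_pos (by linarith)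
  have hlam1 : lamq < 1 := by linarith
  have horbit (n : ℕ) : f^[n + 1] (π / q * (1 - lamq)) ∈
      Icc 0 (lamq ^ (n + 1) * (1 - lamq) * (π / q)) :=
    mapsTo_iterate_Icc_of_scale_le hα.le hmono hpos hscale hval hlamq0 hlam1.le (by linarith)
      (by linarith) (n + 1) ⟨mul_nonneg hα.le (by linarith), (mul_comm _ _).le⟩
  have htan (n : ℕ) : tan (f^[n + 1] (π / q * (1 - lamq))) ∈
      Icc 0 (2 * tan (π / (2 * q)) * (lamq ^ (n + 1) * (1 - lamq))) := by
    have hw0 : 0 ≤ lamq ^ (n + 1) * (1 - lamq) := mul_nonneg (pow_nonneg hlamq0 _) (by linarith)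
    have hw1 := pow_succ_mul_one_sub_le_quarter hlamq0 hlam1.le n
    have h := mapsTo_tan_Icc_mul (t := 2 * (lamq ^ (n + 1) * (1 - lamq))) ha0.le ha
      (by linarith) (by linarith) ⟨(horbit n).1, (horbit n).2.trans_eq (by ring)⟩
    exact ⟨h.1, h.2.trans_eq (by ring)⟩
  have hgeom := (hasSum_pow_succ_mul_one_sub hlamq0 hlam1).mul_left (2 * tan (π / (2 * q)))
  have hsum : Summable fun n : ℕ => tan (f^[n + 1] (π / q * (1 - lamq))) :=
    hgeom.summable.of_nonneg_of_le (fun n => (htan n).1) (fun n => (htan n).2)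
  refine ⟨fun n => (horbit n).2.trans_eq (by ring),
    fun n => (htan n).2.trans_eq (mul_assoc _ _ _).symm, hsum, ?_, by linarith⟩
  rw [inv_mul_le_iff₀ (tan_pos_of_pos_of_lt_pi_div_two ha0 ha)]
  linarith [hasSum_le (fun n => (htan n).2) hsum.hasSum hgeom]
end
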